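/- Define for vectors x_1,...,x_A ∈ R^d and scalars y_1,...,y_A the truncated log-probability g_{k,η₁}(x,y) = log(max{P_{z∼N(0,I_d)}(⟨x_k - x_j, z⟩ + y_k - y_j ≥ 0 for all j ∈ [A]), η₁}). On the region where ||x_i - x_j||_2 ≥ η for all i ≠ j, g_{k,η₁} is Lipschitz in each scalar argument y_j (j ≠ k) with |g_{k,η₁}(...,y_j,...) - g_{k,η₁}(...,y_j',...)| ≤ 2|y_j - y_j'|/(η·η₁). -/

import Mathlib

/-
Replacing `y j` by `c` moves only the `j`-th constraint of the event, so the event changes only on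
the slab `{z | ⟨x k - x j, z⟩ ∈ [y j - y k, c - y k]}`. Under the standard Gaussian, `⟨x k - x j, z⟩`
is a centred Gaussian of standard deviation `‖x k - x j‖ ≥ η`, whose density is at most
`1 / (√(2π) η) ≤ 1 / η`, so the slab has probability at most `|y j - c| / η`. Finally
`t ↦ log (max t η₁)` is `1 / η₁`-Lipschitz.
-/

open MeasureTheory ProbabilityTheory Real

/-- The Euclidean norm of a vector in `Fin d → ℝ`. -/
noncomputable def l2norm {d : ℕ} (v : Fin d → ℝ) : ℝ := Real.sqrt (∑ i, v i ^ 2)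

/-- The truncated log-probability
`g_{k,η₁}(x, y) = log (max (P_{z∼N(0,I_d)}(⟨x_k - x_j, z⟩ + y_k - y_j ≥ 0 ∀ j), η₁))`. -/
noncomputable def truncLogProb {d A : ℕ} (η₁ : ℝ) (x : Fin A → (Fin d → ℝ))
    (y : Fin A → ℝ) (k : Fin A) : ℝ :=
  Real.log (max
    (((Measure.pi (fun _ : Fin d => gaussianReal 0 1))
        {z | ∀ j, 0 ≤ (∑ i, (x k i - x j i) * z i) + y k - y j}).toReal) η₁)

open scoped NNReal symmDiff

lemma map_pi_gaussianReal_sum_mul {ι : Type*} [Fintype ι] (v : ι → ℝ) :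
    (Measure.pi fun _ : ι => gaussianReal 0 1).map (fun z => ∑ i, v i * z i) =
      gaussianReal 0 (‖WithLp.toLp 2 v‖₊ ^ 2) := by
  have hL : (fun z : ι → ℝ => ∑ i, v i * z i) = innerSL ℝ (WithLp.toLp 2 v) ∘ WithLp.toLp 2 := by
    ext z; simp [PiLp.inner_apply, mul_comm]
  rw [hL, ← Measure.map_map (by fun_prop) (by fun_prop), map_pi_eq_stdGaussian,
    IsGaussian.map_eq_gaussianReal, integral_strongDual_stdGaussian, variance_dual_stdGaussian,
    innerSL_apply_norm]
  congr 1
  rw [← coe_nnnorm, ← NNReal.coe_pow, Real.toNNReal_coe]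

lemma gaussianPDFReal_le (m : ℝ) (v : ℝ≥0) (x : ℝ) :
    gaussianPDFReal m v x ≤ (√(2 * π * v))⁻¹ := by
  rw [gaussianPDFReal]
  refine mul_le_of_le_one_right (by positivity) (exp_le_one_iff.2 ?_)
  exact div_nonpos_of_nonpos_of_nonneg (neg_nonpos.2 (sq_nonneg _)) (by positivity)

lemma gaussianReal_le_ofReal_mul_volume (m : ℝ) {v : ℝ≥0} (hv : v ≠ 0) (s : Set ℝ) :
    gaussianReal m v s ≤ ENNReal.ofReal (√(2 * π * v))⁻¹ * volume s := by
  rw [gaussianReal_apply m hv, ← setLIntegral_const]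
  exact setLIntegral_mono (by fun_prop) fun x _ => ENNReal.ofReal_le_ofReal (gaussianPDFReal_le m v x)

lemma norm_toLp_eq_l2norm {d : ℕ} (v : Fin d → ℝ) : ‖WithLp.toLp 2 v‖ = l2norm v := by
  simp [EuclideanSpace.norm_eq, l2norm]

lemma measureReal_pi_gaussianReal_sum_mul_mem_uIcc_le {ι : Type*} [Fintype ι] {v : ι → ℝ}
    (hv : v ≠ 0) (a b : ℝ) :
    (Measure.pi fun _ : ι => gaussianReal 0 1).real
        ((fun z => ∑ i, v i * z i) ⁻¹' Set.uIcc a b) ≤ |b - a| / (√(2 * π) * ‖WithLp.toLp 2 v‖) := by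
  have hv' : ‖WithLp.toLp 2 v‖₊ ^ 2 ≠ 0 := by simpa using hv
  have hsqrt : √(2 * π * ((‖WithLp.toLp 2 v‖₊ ^ 2 : ℝ≥0) : ℝ)) = √(2 * π) * ‖WithLp.toLp 2 v‖ := by
    rw [NNReal.coe_pow, coe_nnnorm, sqrt_mul (by positivity), sqrt_sq (norm_nonneg _)]
  refine ENNReal.toReal_le_of_le_ofReal (by positivity) ?_
  calc _ ≤ (Measure.pi fun _ : ι => gaussianReal 0 1).map (fun z => ∑ i, v i * z i) (Set.uIcc a b) :=
        Measure.le_map_apply (Measurable.aemeasurable (by fun_prop)) _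
    _ ≤ ENNReal.ofReal (√(2 * π) * ‖WithLp.toLp 2 v‖)⁻¹ * volume (Set.uIcc a b) := by
        rw [map_pi_gaussianReal_sum_mul, ← hsqrt]
        exact gaussianReal_le_ofReal_mul_volume 0 hv' _
    _ = ENNReal.ofReal (|b - a| / (√(2 * π) * ‖WithLp.toLp 2 v‖)) := by
        rw [Real.volume_interval, ← ENNReal.ofReal_mul (by positivity), div_eq_inv_mul]

lemma abs_log_sub_log_le_of_le {a p q : ℝ} (ha : 0 < a) (hp : a ≤ p) (hq : a ≤ q) :
    |log p - log q| ≤ |p - q| / a := by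
  wlog hqp : q ≤ p generalizing p q
  · rw [abs_sub_comm, abs_sub_comm p]
    exact this hq hp (le_of_not_ge hqp)
  have hq0 : 0 < q := ha.trans_le hq
  rw [abs_of_nonneg (sub_nonneg.2 (log_le_log hq0 hqp)), abs_of_nonneg (sub_nonneg.2 hqp)]
  calc log p - log q = log (p / q) := (log_div (hq0.trans_le hqp).ne' hq0.ne').symm
    _ ≤ p / q - 1 := log_le_sub_one_of_pos (div_pos (hq0.trans_le hqp) hq0)
    _ = (p - q) / q := by field_simp
    _ ≤ (p - q) / a := div_le_div_of_nonneg_left (sub_nonneg.2 hqp) ha hq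

lemma abs_log_max_sub_log_max_le {a : ℝ} (ha : 0 < a) (u w : ℝ) :
    |log (max u a) - log (max w a)| ≤ |u - w| / a :=
  (abs_log_sub_log_le_of_le ha (le_max_right u a) (le_max_right w a)).trans <|
    div_le_div_of_nonneg_right (abs_max_sub_max_le_abs u w a) ha.le

-- The event of `truncLogProb`: the index `k` maximises `⟨x j, z⟩ + y j` over `j`.
def argmaxSet {ι κ : Type*} [Fintype κ] (x : ι → κ → ℝ) (y : ι → ℝ) (k : ι) : Set (κ → ℝ) :=
  {z | ∀ j, 0 ≤ (∑ i, (x k i - x j i) * z i) + y k - y j}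

lemma measurableSet_argmaxSet {ι κ : Type*} [Countable ι] [Fintype κ] (x : ι → κ → ℝ)
    (y : ι → ℝ) (k : ι) : MeasurableSet (argmaxSet x y k) := by
  simp only [argmaxSet, Set.ofPred_forall]
  exact .iInter fun j => measurableSet_le measurable_const (by fun_prop)

lemma mem_argmaxSet_update_iff {ι κ : Type*} [Fintype κ] [DecidableEq ι]
    (x : ι → κ → ℝ) (y : ι → ℝ) {j k : ι} (hjk : j ≠ k) (c : ℝ) {z : κ → ℝ}
    (hz : ∑ i, (x k i - x j i) * z i ∉ Set.uIcc (y j - y k) (c - y k)) :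
    z ∈ argmaxSet x (Function.update y j c) k ↔ z ∈ argmaxSet x y k := by
  simp only [argmaxSet, Set.mem_ofPred_eq, Function.update_of_ne hjk.symm]
  refine forall_congr' fun j' => ?_
  rcases eq_or_ne j' j with rfl | hj'
  · rw [Set.mem_uIcc] at hz
    rw [Function.update_self]
    grind
  · rw [Function.update_of_ne hj']

lemma argmaxSet_symmDiff_update_subset {ι κ : Type*} [Fintype κ] [DecidableEq ι]
    (x : ι → κ → ℝ) (y : ι → ℝ) {j k : ι} (hjk : j ≠ k) (c : ℝ) :
    argmaxSet x y k ∆ argmaxSet x (Function.update y j c) k ⊆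
      (fun z => ∑ i, (x k i - x j i) * z i) ⁻¹' Set.uIcc (y j - y k) (c - y k) := by
  intro z hz
  by_contra hslab
  rw [Set.mem_symmDiff, mem_argmaxSet_update_iff x y hjk c hslab] at hz
  tauto

theorem truncLogProb_lipschitz_in_y_general {d A : ℕ} (η₁ η : ℝ)
    (hη₁ : 0 < η₁) (hη : 0 < η)
    (x : Fin A → (Fin d → ℝ))
    (hsep : ∀ i j : Fin A, i ≠ j → η ≤ l2norm (fun s => x i s - x j s))
    (y : Fin A → ℝ) (j k : Fin A) (hjk : j ≠ k) (c : ℝ) :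
    |truncLogProb η₁ x y k - truncLogProb η₁ x (Function.update y j c) k| ≤
      2 * |y j - c| / (η * η₁) := by
  set μ := Measure.pi fun _ : Fin d => gaussianReal 0 1
  set v : Fin d → ℝ := fun s => x k s - x j s
  have hσ : η ≤ ‖WithLp.toLp 2 v‖ := (norm_toLp_eq_l2norm v).symm ▸ hsep k j hjk.symm
  have hv : v ≠ 0 := fun hv => by simp [hv] at hσ; linarith
  have hsqrt : 1 ≤ √(2 * π) := one_le_sqrt.2 (by linarith [pi_gt_three])
  have hslab : μ.real (argmaxSet x y k ∆ argmaxSet x (Function.update y j c) k) ≤ |y j - c| / η :=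
    calc _ ≤ μ.real ((fun z => ∑ i, v i * z i) ⁻¹' Set.uIcc (y j - y k) (c - y k)) :=
          measureReal_mono (argmaxSet_symmDiff_update_subset x y hjk c)
      _ ≤ |c - y k - (y j - y k)| / (√(2 * π) * ‖WithLp.toLp 2 v‖) :=
          measureReal_pi_gaussianReal_sum_mul_mem_uIcc_le hv _ _
      _ ≤ |y j - c| / η := by
          rw [sub_sub_sub_cancel_right, abs_sub_comm]
          gcongr
          exact hσ.trans (le_mul_of_one_le_left (norm_nonneg _) hsqrt)
  calc _ ≤ |μ.real (argmaxSet x y k) - μ.real (argmaxSet x (Function.update y j c) k)| / η₁ :=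
        abs_log_max_sub_log_max_le hη₁ _ _
    _ ≤ μ.real (argmaxSet x y k ∆ argmaxSet x (Function.update y j c) k) / η₁ := by
        gcongr
        exact abs_measureReal_sub_le_measureReal_symmDiff
          (measurableSet_argmaxSet x y k).nullMeasurableSet
          (measurableSet_argmaxSet x _ k).nullMeasurableSet
    _ ≤ |y j - c| / η / η₁ := by gcongr
    _ ≤ 2 * |y j - c| / (η * η₁) := by
        rw [div_div]
        gcongr
        linarith [abs_nonneg (y j - c)]

/-- On the region where the `x_i` are `η`-separated, the truncated log-probability
`g_{k,η₁}` is Lipschitz in each scalar argument `y_j` (`j ≠ k`) with constant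
`2/(η·η₁)`. -/
theorem truncLogProb_lipschitz_in_y {d A : ℕ} (η₁ η : ℝ)
    (hη₁ : 0 < η₁) (hη₁1 : η₁ < 1) (hη : 0 < η)
    (x : Fin A → (Fin d → ℝ))
    (hsep : ∀ i j : Fin A, i ≠ j → η ≤ l2norm (fun s => x i s - x j s))
    (y : Fin A → ℝ) (j k : Fin A) (hjk : j ≠ k) (c : ℝ) :
    |truncLogProb η₁ x y k - truncLogProb η₁ x (Function.update y j c) k| ≤
      2 * |y j - c| / (η * η₁) :=
  truncLogProb_lipschitz_in_y_general η₁ η hη₁ hη x hsep y j k hjk c
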